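/- arXiv:0903.2567 — 9 statements merged into one kernel-verified Lean document; each statement's English description precedes it below -/
import Mathlib

section
/- Let X be a Boolean metric space over a Boolean ring B and suppose x ∈ X is a convex combination of x₁,…,xₙ ∈ X with coefficients a₁,…,aₙ ∈ B. Then for every y ∈ X, d(x,y) = a₁·d(x₁,y) + ⋯ + aₙ·d(xₙ,y), where the summands aᵢ·d(xᵢ,y) have pairwise zero products. -/
/-- The order on a Boolean ring: `a ≤ b` iff `a * b = a`. -/
def ble {B : Type} [BooleanRing B] (a b : B) : Prop := a * b = a

/-- The join on a Boolean ring: `a ∨ b = a + b + a * b`. -/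
def bjoin {B : Type} [BooleanRing B] (a b : B) : B := a + b + a * b

/-- A Boolean metric space over a Boolean ring `B`: `d x y = 0` iff `x = y`,
`d` is symmetric, and `d x z ≤ d x y ∨ d y z`. -/
structure BooleanMetric (B : Type) [BooleanRing B] (X : Type) where
  d : X → X → B
  d_eq_zero : ∀ x y, d x y = 0 ↔ x = y
  d_symm : ∀ x y, d x y = d y x
  d_tri : ∀ x y z, ble (d x z) (bjoin (d x y) (d y z))

/-- The coefficients `a i` have pairwise zero products. -/
def PairwiseOrthCoeffs {B : Type} [BooleanRing B] {k : ℕ} (a : Fin k → B) : Prop :=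
  ∀ i j, i ≠ j → a i * a j = 0

/-- `x` is a convex combination of `x₁, …, xₖ` with coefficients `a₁, …, aₖ`,
i.e. `aᵢ · d(x, xᵢ) = 0` for all `i`. -/
def IsConvComb {B X : Type} [BooleanRing B] (m : BooleanMetric B X) {k : ℕ}
    (a : Fin k → B) (xs : Fin k → X) (x : X) : Prop :=
  ∀ i, a i * m.d x (xs i) = 0

/-- A subset `S` is convex: every convex combination of points of `S` (with pairwise
disjoint coefficients summing to `1`) exists in `S`. -/
def IsConvexSubspace {B X : Type} [BooleanRing B] (m : BooleanMetric B X) (S : Set X) : Prop :=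
  ∀ (k : ℕ) (a : Fin k → B) (xs : Fin k → X), (∀ i, xs i ∈ S) →
    PairwiseOrthCoeffs a → (∑ i, a i) = 1 → ∃ x ∈ S, IsConvComb m a xs x

/-- A subset `S` is a CFG-space: it is convex and there are finitely many points of `S`
of which every point of `S` is a convex combination. -/
def IsCFGSubspace {B X : Type} [BooleanRing B] (m : BooleanMetric B X) (S : Set X) : Prop :=
  IsConvexSubspace m S ∧
  ∃ (k : ℕ) (xs : Fin k → X), (∀ i, xs i ∈ S) ∧
    ∀ x ∈ S, ∃ a : Fin k → B, PairwiseOrthCoeffs a ∧ (∑ i, a i) = 1 ∧ IsConvComb m a xs x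

/-- A contractive map: `d(f x, f y) ≤ d(x, y)`. -/
def Contractive {B X Y : Type} [BooleanRing B] (mX : BooleanMetric B X) (mY : BooleanMetric B Y)
    (f : X → Y) : Prop :=
  ∀ x y, ble (mY.d (f x) (f y)) (mX.d x y)

/-- `sm a x` is the convex combination `a x + (a+1) 0` of `x` and the base point `z`
with coefficients `a` and `a + 1`. -/
def IsScalarMul {B X : Type} [BooleanRing B] (m : BooleanMetric B X) (z : X)
    (sm : B → X → X) : Prop :=
  ∀ a x, a * m.d (sm a x) x = 0 ∧ (a + 1) * m.d (sm a x) z = 0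

/-- `x ⊥ y`, i.e. `x ⋆ y = (d(x,y)+1) x = 0`. -/
def Orth {B X : Type} [BooleanRing B] (m : BooleanMetric B X) (z : X) (sm : B → X → X)
    (x y : X) : Prop :=
  sm (m.d x y + 1) x = z

/-- `x` is the convex combination of `0, x₁, …, xₖ` with coefficients
`a₀ = 1 + a₁ + ⋯ + aₖ, a₁, …, aₖ`. -/
def ConvCombWithZero {B X : Type} [BooleanRing B] (m : BooleanMetric B X) (z : X) {k : ℕ}
    (a : Fin k → B) (xs : Fin k → X) (x : X) : Prop :=
  PairwiseOrthCoeffs a ∧ (∀ i, a i * m.d x (xs i) = 0) ∧ (1 + ∑ i, a i) * m.d x z = 0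

/-- `x₁, …, xₖ` is a referential of `(X, z)`: the `xᵢ` are nonzero, pairwise orthogonal,
and every point of `X` is a convex combination of `0, x₁, …, xₖ`. -/
def IsReferential {B X : Type} [BooleanRing B] (m : BooleanMetric B X) (z : X)
    (sm : B → X → X) {k : ℕ} (xs : Fin k → X) : Prop :=
  (∀ i, xs i ≠ z) ∧ (∀ i j, i ≠ j → Orth m z sm (xs i) (xs j)) ∧
  ∀ x : X, ∃ a : Fin k → B, ConvCombWithZero m z a xs x

/-- The whole space is a convex closure of the subset `S`: it is convex and every point
is a convex combination of points of `S`. -/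
def IsConvexClosure {B X : Type} [BooleanRing B] (m : BooleanMetric B X) (S : Set X) : Prop :=
  IsConvexSubspace m Set.univ ∧
  ∀ x : X, ∃ (k : ℕ) (a : Fin k → B) (xs : Fin k → X),
    (∀ i, xs i ∈ S) ∧ PairwiseOrthCoeffs a ∧ (∑ i, a i) = 1 ∧ IsConvComb m a xs x

/-- A finite set `R` is a referential of `(X, z)` (set version). -/
def IsReferentialSet {B X : Type} [BooleanRing B] (m : BooleanMetric B X) (z : X)
    (sm : B → X → X) (R : Finset X) : Prop :=
  z ∉ R ∧ (∀ x ∈ R, ∀ y ∈ R, x ≠ y → Orth m z sm x y) ∧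
  ∀ u : X, ∃ a : X → B,
    (∀ x ∈ R, ∀ y ∈ R, x ≠ y → a x * a y = 0) ∧
    (∀ x ∈ R, a x * m.d u x = 0) ∧ (1 + ∑ x ∈ R, a x) * m.d u z = 0

namespace BooleanMetric

variable {B X : Type} [BooleanRing B] (m : BooleanMetric B X)

theorem mul_d_le_of_mul_d_eq_zero {c : B} {x x' : X} (h : c * m.d x x' = 0) (y : X) :
    ble (c * m.d x y) (m.d x' y) := by
  have htri : m.d x y * (m.d x x' + m.d x' y + m.d x x' * m.d x' y) = m.d x y := m.d_tri x x' y
  unfold ble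
  linear_combination c * htri - (m.d x y + m.d x y * m.d x' y) * h

theorem mul_d_eq_of_mul_d_eq_zero {c : B} {x x' : X} (h : c * m.d x x' = 0) (y : X) :
    c * m.d x y = c * m.d x' y := by
  have h' : c * m.d x' x = 0 := by rw [m.d_symm, h]
  have hle : ble (c * m.d x y) (m.d x' y) := m.mul_d_le_of_mul_d_eq_zero h y
  have hle' : ble (c * m.d x' y) (m.d x y) := m.mul_d_le_of_mul_d_eq_zero h' y
  unfold ble at hle hle'
  linear_combination hle' - hle

end BooleanMetric

theorem PairwiseOrthCoeffs.mul_right {B : Type} [BooleanRing B] {k : ℕ} {a : Fin k → B}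
    (ha : PairwiseOrthCoeffs a) (b : Fin k → B) : PairwiseOrthCoeffs fun i => a i * b i := by
  intro i j hij
  calc a i * b i * (a j * b j) = a i * a j * (b i * b j) := by ring
    _ = 0 := by rw [ha i j hij, zero_mul]

/-- If `x` is a convex combination of `x₁,…,xₖ` with coefficients `a₁,…,aₖ`, then for
every `y`, `d(x,y) = ⊕ᵢ aᵢ·d(xᵢ,y)`, the summands having pairwise zero products. -/
theorem stmt0 {B X : Type} [BooleanRing B] (m : BooleanMetric B X)
    {k : ℕ} (a : Fin k → B) (xs : Fin k → X) (x : X)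
    (horth : PairwiseOrthCoeffs a) (hsum : (∑ i, a i) = 1)
    (hcc : IsConvComb m a xs x) (y : X) :
    m.d x y = ∑ i, a i * m.d (xs i) y ∧
    ∀ i j, i ≠ j → (a i * m.d (xs i) y) * (a j * m.d (xs j) y) = 0 := by
  refine ⟨?_, horth.mul_right fun i => m.d (xs i) y⟩
  calc m.d x y = (∑ i, a i) * m.d x y := by rw [hsum, one_mul]
    _ = ∑ i, a i * m.d x y := Finset.sum_mul _ _ _
    _ = ∑ i, a i * m.d (xs i) y :=
      Finset.sum_congr rfl fun i _ => m.mul_d_eq_of_mul_d_eq_zero (hcc i) y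
end

section
/- Let X be a Boolean metric space over a Boolean ring B, x₁,…,xₙ ∈ X, and a₁,…,aₙ ∈ B with aᵢaⱼ = 0 for i ≠ j and a₁ + ⋯ + aₙ = 1. If x ∈ X and y ∈ X are both convex combinations of x₁,…,xₙ with coefficients a₁,…,aₙ, then x = y. -/
theorem mul_eq_zero_of_ble_bjoin {B : Type} [BooleanRing B] {a b c e : B}
    (h : ble a (bjoin b c)) (hb : e * b = 0) (hc : e * c = 0) : e * a = 0 := by
  unfold ble bjoin at h
  linear_combination -e * h + a * hb + a * hc + a * c * hb

theorem BooleanMetric.mul_d_eq_zero_trans {B X : Type} [BooleanRing B] (m : BooleanMetric B X)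
    {e : B} {x y z : X} (hxy : e * m.d x y = 0) (hyz : e * m.d y z = 0) : e * m.d x z = 0 :=
  mul_eq_zero_of_ble_bjoin (m.d_tri x y z) hxy hyz

theorem eq_zero_of_forall_mul_eq_zero_of_sum_eq_one {R ι : Type*} [Semiring R] {s : Finset ι}
    {a : ι → R} {b : R} (hsum : ∑ i ∈ s, a i = 1) (h : ∀ i ∈ s, a i * b = 0) : b = 0 := by
  rw [← one_mul b, ← hsum, Finset.sum_mul]
  exact Finset.sum_eq_zero h

theorem stmt1_general {B X : Type} [BooleanRing B] (m : BooleanMetric B X)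
    {k : ℕ} (a : Fin k → B) (xs : Fin k → X)
    (hsum : (∑ i, a i) = 1)
    (x y : X) (hx : IsConvComb m a xs x) (hy : IsConvComb m a xs y) :
    x = y := by
  have hd : m.d x y = 0 := eq_zero_of_forall_mul_eq_zero_of_sum_eq_one hsum fun i _ =>
    m.mul_d_eq_zero_trans (hx i) (by rw [m.d_symm]; exact hy i)
  exact (m.d_eq_zero x y).mp hd

/-- Uniqueness of convex combinations. -/
theorem stmt1 {B X : Type} [BooleanRing B] (m : BooleanMetric B X)
    {k : ℕ} (a : Fin k → B) (xs : Fin k → X)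
    (horth : PairwiseOrthCoeffs a) (hsum : (∑ i, a i) = 1)
    (x y : X) (hx : IsConvComb m a xs x) (hy : IsConvComb m a xs y) :
    x = y :=
  stmt1_general m a xs hsum x y hx hy
end

section
/- Let A be a commutative von Neumann regular ring, M an A-module, and S ⊆ M a metrizable subset. Then conv(S) = {a₁x₁ + ⋯ + aₙxₙ ∈ M : n ∈ ℕ, xᵢ ∈ S, aᵢ ∈ B(A), aᵢaⱼ = 0 for i ≠ j, a₁ + ⋯ + aₙ = 1} is also a metrizable subset of M. -/
/-- A subset `S` of a module `M` over `A` is metrizable if the annihilator of `x - y`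
is a principal ideal for all `x, y ∈ S`. -/
def IsMetrizable (A : Type) {M : Type} [CommRing A] [AddCommGroup M] [Module A M]
    (S : Set M) : Prop :=
  ∀ x ∈ S, ∀ y ∈ S, (Ideal.torsionOf A M (x - y)).IsPrincipal

/-- The convex closure of `S` in `M`: all combinations `a₁ x₁ + ⋯ + aₖ xₖ` with
`xᵢ ∈ S`, the `aᵢ` idempotent with pairwise zero products and `a₁ + ⋯ + aₖ = 1`. -/
def convSet (A : Type) {M : Type} [CommRing A] [AddCommGroup M] [Module A M]
    (S : Set M) : Set M :=
  {x | ∃ (k : ℕ) (a : Fin k → A) (xs : Fin k → M),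
    (∀ i, a i * a i = a i) ∧ (∀ i, xs i ∈ S) ∧
    (∀ i j, i ≠ j → a i * a j = 0) ∧ (∑ i, a i) = 1 ∧ x = ∑ i, a i • xs i}

/-!
In a von Neumann regular ring every principal ideal is generated by an idempotent. For
`x = ∑ aᵢ xᵢ` and `y = ∑ bⱼ yⱼ` in `conv(S)` the products `aᵢ bⱼ` again form a complete
family of orthogonal idempotents, and on the piece cut out by `aᵢ bⱼ` the difference `x - y`
agrees with `xᵢ - yⱼ`. Gluing idempotent generators `eᵢⱼ` of `Ann(xᵢ - yⱼ)` along this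
decomposition, `Ann(x - y)` is generated by `∑ aᵢ bⱼ eᵢⱼ`.
-/

theorem IsIdempotentElem.mem_span_singleton_iff {R : Type*} [CommSemiring R] {e c : R}
    (he : IsIdempotentElem e) : c ∈ Ideal.span {e} ↔ c * e = c := by
  rw [Ideal.mem_span_singleton']
  refine ⟨?_, fun h => ⟨c, h⟩⟩
  rintro ⟨a, rfl⟩
  rw [mul_assoc, he.eq]

theorem Submodule.IsPrincipal.exists_isIdempotentElem_eq_span {R : Type*} [CommRing R]
    (hreg : ∀ a : R, ∃ b, a * b * a = a) {I : Ideal R} (hI : I.IsPrincipal) :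
    ∃ e, IsIdempotentElem e ∧ I = Ideal.span {e} := by
  obtain ⟨⟨d, rfl⟩⟩ := hI
  obtain ⟨b, hb⟩ := hreg d
  refine ⟨d * b, by rw [IsIdempotentElem, ← mul_assoc, hb], le_antisymm ?_ ?_⟩
  · exact Ideal.span_singleton_le_span_singleton.mpr ⟨d, hb.symm⟩
  · exact Ideal.span_singleton_le_span_singleton.mpr (dvd_mul_right d b)

theorem OrthogonalIdempotents.smul_sum_smul {R M ι : Type*} [Semiring R] [AddCommMonoid M]
    [Module R M] [Fintype ι] {e : ι → R} (he : OrthogonalIdempotents e) (x : ι → M) (i : ι) :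
    e i • ∑ j, e j • x j = e i • x i := by
  classical
  simp [Finset.smul_sum, smul_smul, he.mul_eq]

theorem Ideal.torsionOf_eq_span_sum_mul {R M ι : Type*} [CommRing R] [AddCommGroup M]
    [Module R M] [Fintype ι] {f e : ι → R} {z : M} {zs : ι → M} (hf : ∑ p, f p = 1)
    (hloc : ∀ p, f p • z = f p • zs p) (he : ∀ p, IsIdempotentElem (e p))
    (hzs : ∀ p, torsionOf R M (zs p) = span {e p}) :
    torsionOf R M z = span {∑ p, f p * e p} := by
  have hmem (p : ι) (c : R) : c • zs p = 0 ↔ c * e p = c := by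
    rw [← mem_torsionOf_iff, hzs p, (he p).mem_span_singleton_iff]
  refine le_antisymm (fun c hc => ?_) ?_
  · rw [mem_torsionOf_iff] at hc
    have hcf (p : ι) : c * f p * e p = c * f p := (hmem p _).1 <| by
      rw [mul_smul, ← hloc, smul_comm, hc, smul_zero]
    refine mem_span_singleton'.mpr ⟨c, ?_⟩
    simp_rw [Finset.mul_sum, ← mul_assoc, hcf, ← Finset.mul_sum, hf, mul_one]
  · rw [span_singleton_le_iff_mem, mem_torsionOf_iff, Finset.sum_smul]
    refine Finset.sum_eq_zero fun p _ => ?_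
    rw [mul_comm, mul_smul, hloc, smul_comm, (hmem p _).2 (he p), smul_zero]

/-- If `A` is a commutative von Neumann regular ring and `S` a metrizable subset of an
`A`-module `M`, then `conv(S)` is also metrizable. -/
theorem stmt3 {A M : Type} [CommRing A] [AddCommGroup M] [Module A M]
    (hreg : ∀ a : A, ∃ b, a * b * a = a)
    (S : Set M) (hS : IsMetrizable A S) :
    IsMetrizable A (convSet A S) := by
  rintro _ ⟨k, a, xs, ha, hxs, horth_a, hsum_a, rfl⟩ _ ⟨l, b, ys, hb, hys, horth_b, hsum_b, rfl⟩
  have hA : OrthogonalIdempotents a := ⟨ha, horth_a⟩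
  have hB : OrthogonalIdempotents b := ⟨hb, horth_b⟩
  choose e he hspan using fun p : Fin k × Fin l =>
    (hS _ (hxs p.1) _ (hys p.2)).exists_isIdempotentElem_eq_span hreg
  have hsum : ∑ p : Fin k × Fin l, a p.1 * b p.2 = 1 := by
    rw [Fintype.sum_prod_type, ← Finset.sum_mul_sum, hsum_a, hsum_b, one_mul]
  have hloc (p : Fin k × Fin l) : (a p.1 * b p.2) • (∑ i, a i • xs i - ∑ j, b j • ys j) =
      (a p.1 * b p.2) • (xs p.1 - ys p.2) := by
    have hx : (a p.1 * b p.2) • ∑ i, a i • xs i = (a p.1 * b p.2) • xs p.1 := by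
      rw [mul_comm, mul_smul, mul_smul, hA.smul_sum_smul]
    have hy : (a p.1 * b p.2) • ∑ j, b j • ys j = (a p.1 * b p.2) • ys p.2 := by
      rw [mul_smul, mul_smul, hB.smul_sum_smul]
    rw [smul_sub, smul_sub, hx, hy]
  exact ⟨⟨_, Ideal.torsionOf_eq_span_sum_mul hsum hloc he hspan⟩⟩
end

section
/- Let A be a commutative von Neumann regular ring, S a metrizable subset of an A-module M with modular metric d, x, x₁,…,xₙ ∈ S, and a₁,…,aₙ ∈ B(A) with aᵢaⱼ = 0 for i ≠ j and a₁ + ⋯ + aₙ = 1. Then aᵢ·d(x,xᵢ) = 0 for all i (i.e., x is the convex combination of x₁,…,xₙ with coefficients a₁,…,aₙ) if and only if x = a₁x₁ + ⋯ + aₙxₙ in M. -/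
/-!
For complete orthogonal idempotents `aᵢ`, an element equals `∑ aᵢ • xᵢ` exactly when it agrees
with `xᵢ` after multiplication by each `aᵢ`. By the defining property of the modular metric,
`aᵢ • x = aᵢ • xᵢ`, i.e. `aᵢ • (x - xᵢ) = 0`, amounts to `aᵢ * (1 - d x xᵢ) = aᵢ`, i.e.
`aᵢ * d x xᵢ = 0`.
-/

theorem CompleteOrthogonalIdempotents.eq_sum_smul_iff {R M ι : Type*} [Semiring R]
    [AddCommMonoid M] [Module R M] [Fintype ι] {e : ι → R} (he : CompleteOrthogonalIdempotents e)
    {x : M} {xs : ι → M} : x = ∑ i, e i • xs i ↔ ∀ i, e i • x = e i • xs i := by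
  classical
  constructor
  · rintro rfl i
    simp only [Finset.smul_sum, smul_smul, he.mul_eq, ite_smul, zero_smul,
      Finset.sum_ite_eq, Finset.mem_univ, if_true]
  · intro h
    calc x = (∑ i, e i) • x := by rw [he.complete, one_smul]
      _ = ∑ i, e i • xs i := by rw [Finset.sum_smul]; exact Finset.sum_congr rfl fun i _ => h i

theorem mul_one_sub_eq_self_iff {R : Type*} [NonAssocRing R] {a b : R} :
    a * (1 - b) = a ↔ a * b = 0 := by
  rw [mul_one_sub, sub_eq_self]

theorem stmt4_general {A M : Type} [CommRing A] [AddCommGroup M] [Module A M]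
    (S : Set M)
    (d : M → M → A)
    (hd : ∀ x ∈ S, ∀ y ∈ S, d x y * d x y = d x y ∧
      ∀ a : A, a • (x - y) = 0 ↔ a * (1 - d x y) = a)
    {k : ℕ} (x : M) (xs : Fin k → M) (a : Fin k → A)
    (hx : x ∈ S) (hxs : ∀ i, xs i ∈ S)
    (horth : ∀ i j, i ≠ j → a i * a j = 0) (hsum : (∑ i, a i) = 1) :
    (∀ i, a i * d x (xs i) = 0) ↔ x = ∑ i, a i • xs i := by
  have ha : CompleteOrthogonalIdempotents a :=
    CompleteOrthogonalIdempotents.iff_ortho_complete.mpr ⟨fun i j hij => horth i j hij, hsum⟩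
  rw [ha.eq_sum_smul_iff]
  refine forall_congr' fun i => ?_
  rw [← sub_eq_zero (a := a i • x), ← smul_sub, (hd x hx (xs i) (hxs i)).2,
    mul_one_sub_eq_self_iff]

/-- For a metrizable subset `S` of an `A`-module with modular metric `d` (so `d x y` is
the idempotent with `a • (x - y) = 0 ↔ a * (1 - d x y) = a`, i.e. the complement of the
idempotent generator of `Ann(x - y)`), a point `x ∈ S` is the convex combination of
`x₁, …, xₖ ∈ S` with coefficients `a₁, …, aₖ` iff `x = a₁ x₁ + ⋯ + aₖ xₖ` in `M`. -/
theorem stmt4 {A M : Type} [CommRing A] [AddCommGroup M] [Module A M]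
    (hreg : ∀ a : A, ∃ b, a * b * a = a)
    (S : Set M) (hS : IsMetrizable A S)
    (d : M → M → A)
    (hd : ∀ x ∈ S, ∀ y ∈ S, d x y * d x y = d x y ∧
      ∀ a : A, a • (x - y) = 0 ↔ a * (1 - d x y) = a)
    {k : ℕ} (x : M) (xs : Fin k → M) (a : Fin k → A)
    (hx : x ∈ S) (hxs : ∀ i, xs i ∈ S)
    (hidem : ∀ i, a i * a i = a i)
    (horth : ∀ i j, i ≠ j → a i * a j = 0) (hsum : (∑ i, a i) = 1) :
    (∀ i, a i * d x (xs i) = 0) ↔ x = ∑ i, a i • xs i :=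
  stmt4_general S d hd x xs a hx hxs horth hsum
end

section
/- Let f : X → Y be a map between Boolean metric spaces (X,d) and (Y,d') over a Boolean ring B. Then f is contractive if and only if for all x, x₁,…,xₙ ∈ X and all a₁,…,aₙ ∈ B with aᵢaⱼ = 0 for i ≠ j and a₁ + ⋯ + aₙ = 1: if x is the convex combination of x₁,…,xₙ with coefficients a₁,…,aₙ, then f(x) is the convex combination of f(x₁),…,f(xₙ) with coefficients a₁,…,aₙ. -/
section BooleanRing

variable {B : Type} [BooleanRing B]

theorem mul_eq_zero_of_ble {a u v : B} (huv : ble u v) (hav : a * v = 0) : a * u = 0 := by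
  rw [← huv, mul_left_comm, hav, mul_zero]

theorem ble_of_add_one_mul_eq_zero {u v : B} (h : (v + 1) * u = 0) : ble u v := by
  unfold ble
  linear_combination h - BooleanRing.add_self u

theorem pairwiseOrthCoeffs_compl_pair (b : B) : PairwiseOrthCoeffs ![b, b + 1] := by
  intro i j hij
  fin_cases i <;> fin_cases j <;> simp_all <;>
    linear_combination BooleanRing.mul_self b + BooleanRing.add_self b

theorem sum_compl_pair (b : B) : ∑ i, ![b, b + 1] i = 1 := by
  simp only [Fin.sum_univ_two, Matrix.cons_val_zero, Matrix.cons_val_one]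
  linear_combination BooleanRing.add_self b

end BooleanRing

theorem isConvComb_pair_left {B X : Type} [BooleanRing B] (m : BooleanMetric B X) (x y : X) :
    IsConvComb m ![m.d x y, m.d x y + 1] ![x, y] x := by
  intro i
  fin_cases i
  · simp [(m.d_eq_zero x x).2 rfl]
  · simp only [Fin.mk_one, Matrix.cons_val_one, Matrix.cons_val_zero]
    linear_combination BooleanRing.mul_self (m.d x y) + BooleanRing.add_self (m.d x y)

/-- A map between Boolean metric spaces is contractive iff it preserves convex
combinations. -/
theorem stmt5 {B X Y : Type} [BooleanRing B]
    (mX : BooleanMetric B X) (mY : BooleanMetric B Y) (f : X → Y) :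
    Contractive mX mY f ↔
    ∀ (k : ℕ) (a : Fin k → B) (xs : Fin k → X) (x : X),
      PairwiseOrthCoeffs a → (∑ i, a i) = 1 →
      IsConvComb mX a xs x → IsConvComb mY a (fun i => f (xs i)) (f x) := by
  constructor
  · intro hf k a xs x _ _ hx i
    exact mul_eq_zero_of_ble (hf x (xs i)) (hx i)
  · intro hf x y
    have hfx := hf 2 _ ![x, y] x (pairwiseOrthCoeffs_compl_pair (mX.d x y))
      (sum_compl_pair (mX.d x y)) (isConvComb_pair_left mX x y)
    exact ble_of_add_one_mul_eq_zero (hfx 1)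
end

section
/- Let (X,0) be a pointed convex Boolean metric space over a Boolean ring B, let R = {x₁,…,xₙ} be a referential of (X,0), and let x ∈ X. Then there is a unique tuple (a₁,…,aₙ) ∈ Bⁿ such that: (1) aᵢaⱼ = 0 whenever i ≠ j; (2) x is the convex combination of 0, x₁,…,xₙ with coefficients a₀, a₁,…,aₙ, where a₀ = 1 + a₁ + ⋯ + aₙ; and (3) aᵢ ≤ |xᵢ| for i = 1,…,n. -/
/-!
Read `e * d(x, y) = 0` as "`x = y` on the part `e` of `B`"; by the triangle inequality,
`x` and `y` then have the same distance to every point on `e`. If `a` is any tuple of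
coordinates of `x`, then on `aⱼ` the point `x` equals `xⱼ`, and orthogonality of the
referential forces `aⱼ |xⱼ| = |xⱼ| (1 + d(x, xⱼ))`, an expression not involving `a`.
Hence cutting any tuple down to `aᵢ |xᵢ|` gives coordinates satisfying `aᵢ ≤ |xᵢ|`, and
any two such tuples agree.
-/

open Finset

namespace BooleanMetric

variable {B X : Type} [BooleanRing B] (m : BooleanMetric B X)

theorem mul_d_eq_mul_d_of_mul_d_eq_zero {e : B} {x y : X} (h : e * m.d x y = 0) (w : X) :
    e * m.d x w = e * m.d y w := by
  have hx := m.d_tri x y w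
  have hy := m.d_tri y x w
  unfold ble bjoin at hx hy
  rw [m.d_symm y x] at hy
  linear_combination e * hy - e * hx + (m.d x w - m.d y w) * h

theorem ble_d_of_orth {z : X} {sm : B → X → X} (hsm : IsScalarMul m z sm) {x y : X}
    (h : Orth m z sm x y) : ble (m.d z x) (m.d x y) := by
  have hz := (hsm (m.d x y + 1) x).1
  rw [show sm (m.d x y + 1) x = z from h] at hz
  unfold ble
  linear_combination hz - BooleanRing.add_self (m.d z x)

end BooleanMetric

namespace ConvCombWithZero

variable {B X : Type} [BooleanRing B] {m : BooleanMetric B X} {z x : X} {k : ℕ}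
  {a : Fin k → B} {xs : Fin k → X}

theorem mul_d_eq (ha : ConvCombWithZero m z a xs x) (i : Fin k) :
    a i * m.d x z = a i * m.d z (xs i) := by
  rw [m.mul_d_eq_mul_d_of_mul_d_eq_zero (ha.2.1 i), m.d_symm]

theorem mul_norm (ha : ConvCombWithZero m z a xs x) :
    ConvCombWithZero m z (fun i => a i * m.d z (xs i)) xs x := by
  obtain ⟨hpair, hdist, hzero⟩ := ha
  refine ⟨fun i j hij => ?_, fun i => ?_, ?_⟩
  · linear_combination (m.d z (xs i) * m.d z (xs j)) * hpair i j hij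
  · linear_combination m.d z (xs i) * hdist i
  · simp only [← mul_d_eq ⟨hpair, hdist, hzero⟩]
    rw [add_mul, one_mul, sum_mul] at hzero ⊢
    simp only [mul_assoc, BooleanRing.mul_self]
    exact hzero

theorem mul_norm_eq (ha : ConvCombWithZero m z a xs x)
    (horth : ∀ i j, i ≠ j → ble (m.d z (xs i)) (m.d (xs i) (xs j))) (j : Fin k) :
    a j * m.d z (xs j) = m.d z (xs j) * (m.d x (xs j) + 1) := by
  obtain ⟨hpair, hdist, hzero⟩ := ha
  set c := m.d z (xs j) * (m.d x (xs j) + 1)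
  -- `c` vanishes on `1 + ∑ aₗ`, where `x = z`, and on each `aₗ` with `l ≠ j`, where `x = xₗ ⊥ xⱼ`
  have hbase : (1 + ∑ l, a l) * c = 0 := by
    have h := m.mul_d_eq_mul_d_of_mul_d_eq_zero hzero (xs j)
    linear_combination m.d z (xs j) * h
      + (1 + ∑ l, a l) * BooleanRing.mul_self (m.d z (xs j))
      + BooleanRing.add_self ((1 + ∑ l, a l) * m.d z (xs j))
  have hother : ∀ l, l ≠ j → a l * c = 0 := fun l hlj => by
    have h := m.mul_d_eq_mul_d_of_mul_d_eq_zero (hdist l) (xs j)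
    have ho : m.d z (xs j) * m.d (xs l) (xs j) = m.d z (xs j) := by
      rw [m.d_symm (xs l) (xs j)]; exact horth j l hlj.symm
    linear_combination m.d z (xs j) * h + a l * ho
      + BooleanRing.add_self (a l * m.d z (xs j))
  have hself : a j * c = a j * m.d z (xs j) := by
    linear_combination m.d z (xs j) * hdist j
  calc a j * m.d z (xs j) = (1 + ∑ l, a l) * c + ∑ l, a l * c := by
        rw [sum_eq_single j (fun l _ hlj => hother l hlj) (by simp), hbase, zero_add, hself]
    _ = c := by
        rw [← sum_mul, ← add_mul, add_assoc, BooleanRing.add_self, add_zero, one_mul]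

end ConvCombWithZero

theorem stmt8_general {B X : Type} [BooleanRing B] (m : BooleanMetric B X)
    (z : X)
    (sm : B → X → X) (hsm : IsScalarMul m z sm)
    {k : ℕ} (xs : Fin k → X) (href : IsReferential m z sm xs) (x : X) :
    ∃! a : Fin k → B,
      ConvCombWithZero m z a xs x ∧ ∀ i, ble (a i) (m.d z (xs i)) := by
  obtain ⟨-, horth, hcover⟩ := href
  have hle : ∀ i j, i ≠ j → ble (m.d z (xs i)) (m.d (xs i) (xs j)) :=
    fun i j hij => m.ble_d_of_orth hsm (horth i j hij)
  obtain ⟨a, ha⟩ := hcover x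
  refine ⟨fun i => a i * m.d z (xs i), ⟨ha.mul_norm, fun i => ?_⟩, ?_⟩
  · simp only [ble, mul_assoc, BooleanRing.mul_self]
  · rintro b ⟨hb, hble⟩
    funext i
    rw [← hble i, hb.mul_norm_eq hle, ha.mul_norm_eq hle]

/-- Coordinates with respect to a referential: every point `x` has a unique tuple of
coefficients `(a₁,…,aₖ)` with pairwise zero products, `aᵢ ≤ |xᵢ|`, and such that `x` is
the convex combination of `0, x₁, …, xₖ` with coefficients `1 + ∑ aᵢ, a₁, …, aₖ`. -/
theorem stmt8 {B X : Type} [BooleanRing B] (m : BooleanMetric B X)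
    (hconv : IsConvexSubspace m Set.univ) (z : X)
    (sm : B → X → X) (hsm : IsScalarMul m z sm)
    {k : ℕ} (xs : Fin k → X) (href : IsReferential m z sm xs) (x : X) :
    ∃! a : Fin k → B,
      ConvCombWithZero m z a xs x ∧ ∀ i, ble (a i) (m.d z (xs i)) :=
  stmt8_general m z sm hsm xs href x
end

section
/- Let (X,0) be a pointed convex Boolean metric space over a Boolean ring B with referential R = {x₁,…,xₙ}, and let (Y,0') be a pointed convex Boolean metric space over B. A map f : R → Y extends to a contractive map f̂ : X → Y with f̂(0) = 0' (and such an extension is unique) if and only if d(0',f(xᵢ)) ≤ d(0,xᵢ) for i = 1,…,n. -/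
section stmt9helpers
variable {B X Y : Type} [BooleanRing B]

private lemma le_of' (m : BooleanMetric B X) (e : B) (w x y : X) (h : e * m.d w x = 0) :
    e * m.d w y * m.d x y = e * m.d w y := by
  have ht := m.d_tri w x y
  unfold ble bjoin at ht
  linear_combination e * ht - (m.d w y + m.d w y * m.d x y) * h

private lemma bkey (m : BooleanMetric B X) (e : B) (x y z : X)
    (h1 : e * m.d x y = 0) (h2 : e * m.d y z = 0) : e * m.d x z = 0 := by
  have ht := m.d_tri x y z
  unfold ble bjoin at ht
  linear_combination (-e) * ht + (m.d x z) * h1 + (m.d x z + m.d x z * m.d x y) * h2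

private lemma scale' (u c e : B) (h : u * c = u) (hc : e * c = 0) : e * u = 0 := by
  linear_combination (-e) * h + u * hc

private lemma sumz {k : ℕ} (a : Fin k → B) (u : B) (h0 : (1 + ∑ i, a i) * u = 0)
    (hi : ∀ i, a i * u = 0) : u = 0 := by
  have hs : (∑ i, a i) * u = 0 := by
    rw [Finset.sum_mul]
    exact Finset.sum_eq_zero (fun i _ => hi i)
  linear_combination h0 - hs

private lemma exists_comb (mY : BooleanMetric B Y) (hY : IsConvexSubspace mY Set.univ) (z' : Y)
    {k : ℕ} (f : Fin k → Y) (a : Fin k → B) (hpo : PairwiseOrthCoeffs a) :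
    ∃ y, (∀ i, a i * mY.d y (f i) = 0) ∧ (1 + ∑ i, a i) * mY.d y z' = 0 := by
  set S : B := ∑ i, a i with hS
  have hpo' : PairwiseOrthCoeffs (Fin.cons (1 + S) a : Fin (k+1) → B) := by
    intro i j hij
    have hSa : ∀ j : Fin k, S * a j = a j := by
      intro j
      rw [hS, Finset.sum_mul, Finset.sum_eq_single j]
      · exact BooleanRing.mul_self (a j)
      · exact fun i _ hij => hpo i j hij
      · exact fun h => absurd (Finset.mem_univ j) h
    rcases Fin.eq_zero_or_eq_succ i with rfl | ⟨i', rfl⟩ <;>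
      rcases Fin.eq_zero_or_eq_succ j with rfl | ⟨j', rfl⟩
    · exact absurd rfl hij
    · simp only [Fin.cons_zero, Fin.cons_succ]
      linear_combination hSa j' + BooleanRing.add_self (a j')
    · simp only [Fin.cons_zero, Fin.cons_succ]
      linear_combination hSa i' + BooleanRing.add_self (a i')
    · simp only [Fin.cons_succ]
      exact hpo i' j' (fun h => hij (by rw [h]))
  have hsum : (∑ i, (Fin.cons (1 + S) a : Fin (k+1) → B) i) = 1 := by
    rw [Fin.sum_univ_succ]
    simp only [Fin.cons_zero, Fin.cons_succ]
    linear_combination BooleanRing.add_self S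
  obtain ⟨y, -, hy⟩ := hY (k+1) (Fin.cons (1 + S) a) (Fin.cons z' f)
    (fun _ => Set.mem_univ _) hpo' hsum
  refine ⟨y, fun i => ?_, ?_⟩
  · have := hy i.succ; simpa using this
  · have := hy 0; simpa using this

end stmt9helpers

/-- A map defined on a referential of `(X, z)` with values in a pointed convex space
`(Y, z')` extends to a (unique) contractive map sending `z` to `z'` iff
`|f(xᵢ)| ≤ |xᵢ|` for all `i`. -/


theorem stmt9 {B X Y : Type} [BooleanRing B]
    (mX : BooleanMetric B X) (mY : BooleanMetric B Y)
    (hX : IsConvexSubspace mX Set.univ) (hY : IsConvexSubspace mY Set.univ)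
    (z : X) (z' : Y) (smX : B → X → X) (hsmX : IsScalarMul mX z smX)
    {k : ℕ} (xs : Fin k → X) (href : IsReferential mX z smX xs) (f : Fin k → Y) :
    (∃! F : X → Y, Contractive mX mY F ∧ F z = z' ∧ ∀ i, F (xs i) = f i) ↔
    ∀ i, ble (mY.d z' (f i)) (mX.d z (xs i)) := by
  constructor
  · rintro ⟨F, ⟨hFc, hFz, hFx⟩, -⟩ i
    have h := hFc z (xs i)
    rwa [hFz, hFx i] at h
  · intro hf
    obtain ⟨hne, horth, hcomb⟩ := href
    choose A hA using hcomb
    have hApo : ∀ x, PairwiseOrthCoeffs (A x) := fun x => (hA x).1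
    have hA1 : ∀ x i, A x i * mX.d x (xs i) = 0 := fun x => (hA x).2.1
    have hA2 : ∀ x, (1 + ∑ i, A x i) * mX.d x z = 0 := fun x => (hA x).2.2
    have hex : ∀ x, ∃ y, (∀ i, A x i * mY.d y (f i) = 0) ∧
        (1 + ∑ i, A x i) * mY.d y z' = 0 :=
      fun x => exists_comb mY hY z' f (A x) (hApo x)
    choose F hF1 hF2 using hex
    have hf' : ∀ i, mY.d z' (f i) * mX.d z (xs i) = mY.d z' (f i) := hf
    -- orthogonality of the referential: d(z, xᵢ) ≤ d(xᵢ, xⱼ)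
    have hoc : ∀ i j, i ≠ j → mX.d z (xs i) * mX.d (xs i) (xs j) = mX.d z (xs i) := by
      intro i j hij
      have ho := horth i j hij
      unfold Orth at ho
      have h1 := (hsmX (mX.d (xs i) (xs j) + 1) (xs i)).1
      rw [ho] at h1
      linear_combination h1 - BooleanRing.add_self (mX.d z (xs i))
    -- aᵢ · d(z, xᵢ) = aᵢ · d(x, z)
    have hA3 : ∀ x i, A x i * mX.d z (xs i) = A x i * mX.d x z := by
      intro x i
      have h := hA1 x i
      have h' : A x i * mX.d (xs i) x = 0 := by rw [mX.d_symm]; exact h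
      have h1 := le_of' mX (A x i) x (xs i) z h
      have h2 := le_of' mX (A x i) (xs i) x z h'
      have h3 : A x i * mX.d x z = A x i * mX.d (xs i) z := by linear_combination h2 - h1
      rw [mX.d_symm z (xs i)]
      exact h3.symm
    have hT : ∀ x x' : X, (1 + mX.d x x') * mX.d x x' = 0 := fun x x' => by
      linear_combination BooleanRing.mul_self (mX.d x x') + BooleanRing.add_self (mX.d x x')
    -- symmetric versions of hF1, hF2
    have hF1' : ∀ x i, A x i * mY.d (f i) (F x) = 0 := by
      intro x i; rw [mY.d_symm]; exact hF1 x i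
    have hF2' : ∀ x, (1 + ∑ i, A x i) * mY.d z' (F x) = 0 := by
      intro x; rw [mY.d_symm]; exact hF2 x
    have hA1' : ∀ x i, A x i * mX.d (xs i) x = 0 := by
      intro x i; rw [mX.d_symm]; exact hA1 x i
    -- contractivity
    have hcontr : Contractive mX mY F := by
      intro x x'
      show mY.d (F x) (F x') * mX.d x x' = mY.d (F x) (F x')
      set t : B := 1 + mX.d x x' with ht
      have htD : t * mX.d x x' = 0 := hT x x'
      have htD' : t * mX.d x' x = 0 := by rw [mX.d_symm]; exact htD
      have main : mY.d (F x) (F x') * t = 0 := by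
        refine sumz (A x) _ ?_ ?_
        · -- coefficient 1 + ∑ A x
          refine sumz (A x') _ ?_ ?_
          · -- (1+Sb)*((1+Sa)*(d*t)) = 0
            set e : B := (1 + ∑ i, A x i) * (1 + ∑ i, A x' i) with he
            have f1 : e * mY.d (F x) z' = 0 := by
              linear_combination (1 + ∑ i, A x' i) * hF2 x
            have f2 : e * mY.d z' (F x') = 0 := by
              linear_combination (1 + ∑ i, A x i) * hF2' x'
            have key := bkey mY e (F x) z' (F x') f1 f2
            linear_combination t * key
          · -- A x' j * ((1+Sa)*(d*t)) = 0
            intro j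
            set e : B := (1 + ∑ i, A x i) * A x' j * t with he
            have f1 : e * mY.d (F x) z' = 0 := by
              linear_combination (A x' j * t) * hF2 x
            have hxx' : e * mX.d x x' = 0 := by
              linear_combination ((1 + ∑ i, A x i) * A x' j) * htD
            have hxz : e * mX.d x z = 0 := by
              linear_combination (A x' j * t) * hA2 x
            have hx'z : e * mX.d x' z = 0 := by
              have hx'x : e * mX.d x' x = 0 := by
                linear_combination ((1 + ∑ i, A x i) * A x' j) * htD'
              exact bkey mX e x' x z hx'x hxz
            have hcj : e * mX.d z (xs j) = 0 := by
              linear_combination ((1 + ∑ i, A x i) * t) * hA3 x' j + hx'z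
            have f2 : e * mY.d z' (f j) = 0 := scale' _ _ e (hf' j) hcj
            have f3 : e * mY.d (f j) (F x') = 0 := by
              linear_combination ((1 + ∑ i, A x i) * t) * hF1' x' j
            have k1 := bkey mY e (F x) z' (f j) f1 f2
            have k2 := bkey mY e (F x) (f j) (F x') k1 f3
            linear_combination k2
        · -- coefficient A x i
          intro i
          refine sumz (A x') _ ?_ ?_
          · -- (1+Sb)*(A x i*(d*t)) = 0
            set e : B := A x i * (1 + ∑ i, A x' i) * t with he
            have f1 : e * mY.d (F x) (f i) = 0 := by
              linear_combination ((1 + ∑ i, A x' i) * t) * hF1 x i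
            have hxx' : e * mX.d x x' = 0 := by
              linear_combination (A x i * (1 + ∑ i, A x' i)) * htD
            have hx'z : e * mX.d x' z = 0 := by
              linear_combination (A x i * t) * hA2 x'
            have hxz := bkey mX e x x' z hxx' hx'z
            have hci : e * mX.d z (xs i) = 0 := by
              linear_combination ((1 + ∑ i, A x' i) * t) * hA3 x i + hxz
            have f2 : e * mY.d (f i) z' = 0 := by
              have := scale' _ _ e (hf' i) hci
              rw [mY.d_symm]; exact this
            have f3 : e * mY.d z' (F x') = 0 := by
              linear_combination (A x i * t) * hF2' x'
            have k1 := bkey mY e (F x) (f i) z' f1 f2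
            have k2 := bkey mY e (F x) z' (F x') k1 f3
            linear_combination k2
          · -- A x' j * (A x i * (d*t)) = 0
            intro j
            by_cases hij : i = j
            · subst hij
              set e : B := A x i * A x' i with he
              have f1 : e * mY.d (F x) (f i) = 0 := by
                linear_combination (A x' i) * hF1 x i
              have f2 : e * mY.d (f i) (F x') = 0 := by
                linear_combination (A x i) * hF1' x' i
              have key := bkey mY e (F x) (f i) (F x') f1 f2
              linear_combination t * key
            · set e : B := A x i * A x' j * t with he
              have f1 : e * mY.d (F x) (f i) = 0 := by
                linear_combination (A x' j * t) * hF1 x i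
              have hxix : e * mX.d (xs i) x = 0 := by
                linear_combination (A x' j * t) * hA1' x i
              have hxx' : e * mX.d x x' = 0 := by
                linear_combination (A x i * A x' j) * htD
              have hx'xj : e * mX.d x' (xs j) = 0 := by
                linear_combination (A x i * t) * hA1 x' j
              have hdij : e * mX.d (xs i) (xs j) = 0 :=
                bkey mX e (xs i) x' (xs j) (bkey mX e (xs i) x x' hxix hxx') hx'xj
              have hdji : e * mX.d (xs j) (xs i) = 0 := by
                rw [mX.d_symm]; exact hdij
              have hci : e * mX.d z (xs i) = 0 := by
                linear_combination (-e) * hoc i j hij + (mX.d z (xs i)) * hdij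
              have hcj : e * mX.d z (xs j) = 0 := by
                linear_combination (-e) * hoc j i (fun h => hij h.symm) +
                  (mX.d z (xs j)) * hdji
              have f2 : e * mY.d (f i) z' = 0 := by
                have := scale' _ _ e (hf' i) hci
                rw [mY.d_symm]; exact this
              have f3 : e * mY.d z' (f j) = 0 := scale' _ _ e (hf' j) hcj
              have f4 : e * mY.d (f j) (F x') = 0 := by
                linear_combination (A x i * t) * hF1' x' j
              have k1 := bkey mY e (F x) (f i) z' f1 f2
              have k2 := bkey mY e (F x) z' (f j) k1 f3
              have k3 := bkey mY e (F x) (f j) (F x') k2 f4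
              linear_combination k3
      linear_combination main - BooleanRing.add_self (mY.d (F x) (F x'))
    -- F z = z'
    have hFz : F z = z' := by
      rw [← (mY.d_eq_zero (F z) z')]
      refine sumz (A z) _ (hF2 z) ?_
      intro i
      have hci : A z i * mX.d z (xs i) = 0 := hA1 z i
      have f2 : A z i * mY.d z' (f i) = 0 := scale' _ _ _ (hf' i) hci
      have f2' : A z i * mY.d (f i) z' = 0 := by rw [mY.d_symm]; exact f2
      exact bkey mY (A z i) (F z) (f i) z' (hF1 z i) f2'
    -- F (xs i) = f i
    have hFxs : ∀ i, F (xs i) = f i := by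
      intro i
      rw [← (mY.d_eq_zero (F (xs i)) (f i))]
      have hji : ∀ j, j ≠ i → A (xs i) j * mX.d z (xs j) = 0 := by
        intro j hj
        have hd : A (xs i) j * mX.d (xs j) (xs i) = 0 := by
          rw [mX.d_symm]; exact hA1 (xs i) j
        linear_combination (-(A (xs i) j)) * hoc j i hj + (mX.d z (xs j)) * hd
      have hci' : ∀ j, j ≠ i → A (xs i) j * mX.d z (xs i) = 0 := by
        intro j hj
        exact bkey mX (A (xs i) j) z (xs j) (xs i) (hji j hj) (hA1' (xs i) j)
      have h0ci : (1 + ∑ j, A (xs i) j) * mX.d z (xs i) = 0 := by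
        rw [mX.d_symm]; exact hA2 (xs i)
      refine sumz (A (xs i)) _ ?_ ?_
      · have f2 : (1 + ∑ j, A (xs i) j) * mY.d z' (f i) = 0 :=
          scale' _ _ _ (hf' i) h0ci
        exact bkey mY _ (F (xs i)) z' (f i) (hF2 (xs i)) f2
      · intro j
        by_cases hj : j = i
        · rw [hj]; exact hF1 (xs i) i
        · have f2 : A (xs i) j * mY.d (f j) z' = 0 := by
            have := scale' _ _ (A (xs i) j) (hf' j) (hji j hj)
            rw [mY.d_symm]; exact this
          have f3 : A (xs i) j * mY.d z' (f i) = 0 :=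
            scale' _ _ _ (hf' i) (hci' j hj)
          have k1 := bkey mY (A (xs i) j) (F (xs i)) (f j) z' (hF1 (xs i) j) f2
          exact bkey mY (A (xs i) j) (F (xs i)) z' (f i) k1 f3
    refine ⟨F, ⟨hcontr, hFz, hFxs⟩, ?_⟩
    -- uniqueness
    rintro G ⟨hGc, hGz, hGx⟩
    funext x
    rw [← (mY.d_eq_zero (G x) (F x))]
    have hG1 : ∀ i, A x i * mY.d (G x) (f i) = 0 := by
      intro i
      have h := hGc x (xs i)
      rw [hGx i] at h
      exact scale' _ _ _ h (hA1 x i)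
    have hG2 : (1 + ∑ i, A x i) * mY.d (G x) z' = 0 := by
      have h := hGc x z
      rw [hGz] at h
      exact scale' _ _ _ h (hA2 x)
    refine sumz (A x) _ ?_ ?_
    · exact bkey mY _ (G x) z' (F x) hG2 (hF2' x)
    · intro i
      exact bkey mY _ (G x) (f i) (F x) (hG1 i) (hF1' x i)
end

section
/- Let (U,0) ⊆ (X,0) be pointed CFG-spaces over a Boolean ring B (U with the restricted metric). Then the orthogonal complement U^⊥ = {x ∈ X : x ⊥ y for all y ∈ U} is a CFG-space, and every element of X is a convex combination of elements of U ∪ U^⊥. -/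
/-!
Orthogonality `x ⊥ y` amounts to `d(x, 0) ≤ d(x, y)`. Tested piece by piece on a partition
of unity, this condition passes to convex combinations, so `U^⊥` is convex.

Every `x` has a nearest point `p ∈ U`, with `d(x, p) ≤ d(x, y)` for all `y ∈ U`. For two points
of `U`, a convex combination of them realises the meet of their distances to `x`, which gives
a nearest point among the finitely many generators. Checking on each coefficient of a convex
combination shows that it is nearest in all of `U`. With `e = d(x, p)`, `x` is `p` on `e + 1`
and `q = e x` on `e`. Since `e ≤ d(x, y)` for `y ∈ U`, we get `q ⊥ U`. Decomposing the
generators `x_j` of `X` as `p_j, q_j` gives the generators `0, q_j` of `U^⊥`: a point of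
`U^⊥` that coincides with some `p_j` on a piece is `0` on that piece.
-/

section BooleanRingLemmas

variable {B : Type} [BooleanRing B]

theorem ble_iff_mul_add_one_eq_zero {a b : B} : ble a b ↔ a * (b + 1) = 0 := by
  rw [mul_add, mul_one, BooleanRing.add_eq_zero', ble]

theorem ble_mul_left (a b : B) : ble (a * b) a := by
  rw [ble, mul_right_comm, BooleanRing.mul_self]

theorem ble_mul_right (a b : B) : ble (a * b) b := by
  rw [ble, mul_assoc, BooleanRing.mul_self]

theorem ble_trans {a b c : B} (hab : ble a b) (hbc : ble b c) : ble a c := by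
  rw [ble] at *
  rw [← hab, mul_assoc, hbc]

theorem mul_add_one_self (a : B) : a * (a + 1) = 0 := by
  rw [add_comm, BooleanRing.mul_one_add_self]

theorem mul_add_add_one_mul (a t : B) : a * t + (a + 1) * t = t := by
  linear_combination t * BooleanRing.add_self a

end BooleanRingLemmas

theorem eq_of_sum_eq_one_of_forall_mul_eq {R ι : Type*} [Semiring R] [Fintype ι] {a : ι → R}
    (ha : ∑ i, a i = 1) {s t : R} (h : ∀ i, a i * s = a i * t) : s = t := by
  calc s = (∑ i, a i) * s := by rw [ha, one_mul]
    _ = (∑ i, a i) * t := by simp only [Finset.sum_mul, h]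
    _ = t := by rw [ha, one_mul]

namespace BooleanMetric

variable {B X : Type} [BooleanRing B] (m : BooleanMetric B X)

theorem d_self (x : X) : m.d x x = 0 := (m.d_eq_zero x x).2 rfl

variable {m}

theorem mul_dist_congr_right {c : B} {x y y' : X} (h : c * m.d y y' = 0) :
    c * m.d x y = c * m.d x y' := by
  have t₁ := m.d_tri x y' y
  have t₂ := m.d_tri x y y'
  rw [ble, bjoin, m.d_symm y' y] at t₁
  rw [ble, bjoin] at t₂
  linear_combination (-c) * t₁ + c * t₂ + (m.d x y - m.d x y') * h

theorem mul_dist_congr_left {c : B} {x x' y : X} (h : c * m.d x x' = 0) :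
    c * m.d x y = c * m.d x' y := by
  rw [m.d_symm x, m.d_symm x']
  exact mul_dist_congr_right h

theorem mul_mul_dist_eq_zero {a b : B} {x y w : X} (hxy : a * m.d x y = 0)
    (hyw : b * m.d y w = 0) : a * b * m.d x w = 0 := by
  calc a * b * m.d x w = b * (a * m.d x w) := by ring
    _ = b * (a * m.d y w) := by rw [mul_dist_congr_left hxy]
    _ = a * (b * m.d y w) := by ring
    _ = 0 := by rw [hyw, mul_zero]

end BooleanMetric

open BooleanMetric

section ConvexCombinations

variable {B X : Type} [BooleanRing B] {m : BooleanMetric B X}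

theorem pairwiseOrthCoeffs_pair (c : B) : PairwiseOrthCoeffs ![c, c + 1] := by
  simp [PairwiseOrthCoeffs, Fin.forall_fin_two, mul_add_one_self, mul_comm (c + 1)]

theorem sum_pair (c : B) : ∑ i, ![c, c + 1] i = 1 := by
  rw [Fin.sum_univ_two, Matrix.cons_val_zero, Matrix.cons_val_one, Matrix.cons_val_fin_one,
    ← add_assoc, BooleanRing.add_self, zero_add]

theorem isConvComb_pair_iff {c : B} {x₁ x₂ x : X} :
    IsConvComb m ![c, c + 1] ![x₁, x₂] x ↔ c * m.d x x₁ = 0 ∧ (c + 1) * m.d x x₂ = 0 := by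
  simp [IsConvComb, Fin.forall_fin_two]

theorem IsConvexSubspace.exists_pair {S : Set X} (hS : IsConvexSubspace m S) {x₁ x₂ : X}
    (h₁ : x₁ ∈ S) (h₂ : x₂ ∈ S) (c : B) :
    ∃ x ∈ S, c * m.d x x₁ = 0 ∧ (c + 1) * m.d x x₂ = 0 := by
  have hmem : ∀ i, ![x₁, x₂] i ∈ S := by
    simp [Fin.forall_fin_two, h₁, h₂]
  obtain ⟨x, hx, hcomb⟩ := hS 2 _ _ hmem (pairwiseOrthCoeffs_pair c) (sum_pair c)
  exact ⟨x, hx, isConvComb_pair_iff.1 hcomb⟩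

theorem PairwiseOrthCoeffs.cons_one_add_sum {k : ℕ} {a : Fin k → B}
    (ha : PairwiseOrthCoeffs a) : PairwiseOrthCoeffs (Fin.cons (1 + ∑ i, a i) a) := by
  have hbase : ∀ j, (1 + ∑ i, a i) * a j = 0 := by
    intro j
    rw [add_mul, one_mul, Finset.sum_mul, Finset.sum_eq_single j
      (fun i _ hij => ha i j hij) (by simp), BooleanRing.mul_self, BooleanRing.add_self]
  intro i j hij
  cases i using Fin.cases <;> cases j using Fin.cases
  · exact absurd rfl hij
  · exact hbase _
  · rw [Fin.cons_zero, Fin.cons_succ, mul_comm]; exact hbase _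
  · exact ha _ _ (fun h => hij (congrArg Fin.succ h))

theorem sum_cons_one_add_sum {k : ℕ} (a : Fin k → B) :
    ∑ i, (Fin.cons (1 + ∑ i, a i) a : Fin (k + 1) → B) i = 1 := by
  rw [Fin.sum_cons, add_assoc, BooleanRing.add_self, add_zero]

theorem IsCFGSubspace.of_convCombWithZero {S : Set X} (hS : IsConvexSubspace m S) {z : X}
    (hz : z ∈ S) {k : ℕ} {xs : Fin k → X} (hxs : ∀ i, xs i ∈ S)
    (hgen : ∀ x ∈ S, ∃ a, ConvCombWithZero m z a xs x) : IsCFGSubspace m S := by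
  refine ⟨hS, k + 1, Fin.cons z xs, fun i => ?_, fun x hx => ?_⟩
  · cases i using Fin.cases
    exacts [hz, hxs _]
  · obtain ⟨a, ha, hcomb, hbase⟩ := hgen x hx
    refine ⟨_, ha.cons_one_add_sum, sum_cons_one_add_sum a, fun i => ?_⟩
    cases i using Fin.cases
    exacts [hbase, hcomb _]

end ConvexCombinations

section OrthogonalComplement

variable {B X : Type} [BooleanRing B] {m : BooleanMetric B X} {z : X} {sm : B → X → X}

theorem IsScalarMul.dist_eq (hsm : IsScalarMul m z sm) (a : B) (x y : X) :
    m.d (sm a x) y = a * m.d x y + (a + 1) * m.d z y := by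
  rw [← mul_dist_congr_left (hsm a x).1, ← mul_dist_congr_left (hsm a x).2,
    mul_add_add_one_mul]

theorem IsScalarMul.orth_iff (hsm : IsScalarMul m z sm) {x y : X} :
    Orth m z sm x y ↔ ble (m.d x z) (m.d x y) := by
  rw [Orth, ← m.d_eq_zero, hsm.dist_eq, m.d_self, mul_zero, add_zero, m.d_symm x z,
    ble_iff_mul_add_one_eq_zero, mul_comm]

theorem IsScalarMul.mul_dist_base_eq_zero_of_orth (hsm : IsScalarMul m z sm) {x y : X}
    (hxy : Orth m z sm x y) {c : B} (hc : c * m.d x y = 0) : c * m.d x z = 0 := by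
  rw [← hsm.orth_iff.1 hxy, ← mul_assoc, mul_right_comm, hc, zero_mul]

variable (m z sm) in
def orthComplement (U : Set X) : Set X := {x | ∀ y ∈ U, Orth m z sm x y}

theorem IsScalarMul.mem_orthComplement_iff (hsm : IsScalarMul m z sm) {U : Set X} {x : X} :
    x ∈ orthComplement m z sm U ↔ ∀ y ∈ U, ble (m.d x z) (m.d x y) :=
  forall₂_congr fun _ _ => hsm.orth_iff

theorem IsScalarMul.base_mem_orthComplement (hsm : IsScalarMul m z sm) (U : Set X) :
    z ∈ orthComplement m z sm U := by
  rw [hsm.mem_orthComplement_iff]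
  intro y _
  rw [ble, m.d_self, zero_mul]

theorem IsScalarMul.isConvexSubspace_orthComplement (hsm : IsScalarMul m z sm)
    (hX : IsConvexSubspace m Set.univ) (U : Set X) :
    IsConvexSubspace m (orthComplement m z sm U) := by
  intro k a qs hqs ha hsum
  obtain ⟨x, -, hx⟩ := hX k a qs (fun _ => trivial) ha hsum
  refine ⟨x, hsm.mem_orthComplement_iff.2 fun y hy => ?_, hx⟩
  refine eq_of_sum_eq_one_of_forall_mul_eq hsum fun i => ?_
  have hqi := hsm.mem_orthComplement_iff.1 (hqs i) y hy
  calc a i * (m.d x z * m.d x y) = (a i * m.d x z) * (a i * m.d x y) := by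
        rw [mul_mul_mul_comm, BooleanRing.mul_self]
    _ = (a i * m.d (qs i) z) * (a i * m.d (qs i) y) := by
        rw [mul_dist_congr_left (hx i), mul_dist_congr_left (hx i)]
    _ = a i * m.d (qs i) z := by rw [mul_mul_mul_comm, BooleanRing.mul_self, hqi]
    _ = a i * m.d x z := (mul_dist_congr_left (hx i)).symm

end OrthogonalComplement

section NearestPoint

variable {B X : Type} [BooleanRing B] {m : BooleanMetric B X} {S : Set X}

theorem IsConvexSubspace.exists_dist_eq_mul (hS : IsConvexSubspace m S) {x₁ x₂ : X}
    (h₁ : x₁ ∈ S) (h₂ : x₂ ∈ S) (x : X) : ∃ p ∈ S, m.d x p = m.d x x₁ * m.d x x₂ := by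
  obtain ⟨p, hp, hp₁, hp₂⟩ := hS.exists_pair h₁ h₂ (m.d x x₂)
  refine ⟨p, hp, ?_⟩
  have h₁' : m.d x x₂ * m.d x p = m.d x x₂ * m.d x x₁ := mul_dist_congr_right hp₁
  have h₂' : (m.d x x₂ + 1) * m.d x p = 0 := by
    rw [mul_dist_congr_right hp₂, mul_comm, mul_add_one_self]
  rw [← mul_add_add_one_mul (m.d x x₂) (m.d x p), h₁', h₂', add_zero, mul_comm]

theorem IsConvexSubspace.exists_forall_ble (hS : IsConvexSubspace m S) (hne : S.Nonempty)
    (x : X) : ∀ {n : ℕ} (u : Fin n → X), (∀ i, u i ∈ S) →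
      ∃ p ∈ S, ∀ i, ble (m.d x p) (m.d x (u i))
  | 0, _, _ => ⟨hne.some, hne.some_mem, fun i => i.elim0⟩
  | _ + 1, u, hu => by
    obtain ⟨p₀, hp₀, hle⟩ := hS.exists_forall_ble hne x (fun i => u i.succ) fun i => hu _
    obtain ⟨p, hp, hdist⟩ := hS.exists_dist_eq_mul (hu 0) hp₀ x
    refine ⟨p, hp, fun i => ?_⟩
    rw [hdist]
    cases i using Fin.cases
    exacts [ble_mul_left _ _, ble_trans (ble_mul_right _ _) (hle _)]

theorem IsCFGSubspace.exists_nearest (hS : IsCFGSubspace m S) (hne : S.Nonempty) (x : X) :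
    ∃ p ∈ S, ∀ y ∈ S, ble (m.d x p) (m.d x y) := by
  obtain ⟨hconv, n, u, huS, hgen⟩ := hS
  obtain ⟨p, hp, hle⟩ := hconv.exists_forall_ble hne x u huS
  refine ⟨p, hp, fun y hy => ?_⟩
  obtain ⟨a, -, hsum, hy⟩ := hgen y hy
  refine eq_of_sum_eq_one_of_forall_mul_eq hsum fun i => ?_
  calc a i * (m.d x p * m.d x y) = m.d x p * (a i * m.d x (u i)) := by
        rw [mul_left_comm, mul_dist_congr_right (hy i)]
    _ = a i * m.d x p := by rw [mul_left_comm, hle i]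

end NearestPoint

section Decomposition

variable {B X : Type} [BooleanRing B] {m : BooleanMetric B X} {z : X} {sm : B → X → X}
  {U : Set X}

theorem IsCFGSubspace.exists_orthogonal_decomposition (hU : IsCFGSubspace m U)
    (hne : U.Nonempty) (hsm : IsScalarMul m z sm) (x : X) :
    ∃ q ∈ orthComplement m z sm U, ∃ p ∈ U, ∃ e : B,
      e * m.d x q = 0 ∧ (e + 1) * m.d x p = 0 := by
  obtain ⟨p, hp, hnearest⟩ := hU.exists_nearest hne x
  refine ⟨sm (m.d x p) x, hsm.mem_orthComplement_iff.2 fun y hy => ?_, p, hp, m.d x p,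
    by rw [m.d_symm x (sm _ x)]; exact (hsm _ x).1, by rw [mul_comm, mul_add_one_self]⟩
  rw [hsm.dist_eq, hsm.dist_eq, m.d_self, mul_zero, add_zero, hnearest y hy,
    ble, mul_assoc, mul_comm (m.d x z), ← mul_assoc, mul_add, BooleanRing.mul_self,
    ← mul_assoc, mul_add_one_self, zero_mul, add_zero]

theorem IsCFGSubspace.isCFGSubspace_orthComplement (hU : IsCFGSubspace m U) (hne : U.Nonempty)
    (hsm : IsScalarMul m z sm) (hX : IsCFGSubspace m Set.univ) :
    IsCFGSubspace m (orthComplement m z sm U) := by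
  obtain ⟨hXconv, n, xs, -, hXgen⟩ := hX
  choose q hq p hp e hqe hpe using fun j => hU.exists_orthogonal_decomposition hne hsm (xs j)
  refine .of_convCombWithZero (hsm.isConvexSubspace_orthComplement hXconv U)
    (hsm.base_mem_orthComplement U) hq fun x hx => ?_
  obtain ⟨c, hc, hcsum, hcx⟩ := hXgen x trivial
  refine ⟨fun j => c j * e j, fun i j hij => ?_,
    fun j => mul_mul_dist_eq_zero (hcx j) (hqe j), ?_⟩
  · rw [mul_mul_mul_comm, hc i j hij, zero_mul]
  · have hcoef : 1 + ∑ j, c j * e j = ∑ j, c j * (e j + 1) := by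
      simp only [mul_add, mul_one, Finset.sum_add_distrib, hcsum, add_comm]
    rw [hcoef, Finset.sum_mul]
    exact Finset.sum_eq_zero fun j _ =>
      hsm.mul_dist_base_eq_zero_of_orth (hx _ (hp j)) (mul_mul_dist_eq_zero (hcx j) (hpe j))

end Decomposition

/-- For pointed CFG-spaces `(U, z) ⊆ (X, z)`, the orthogonal complement
`U^⊥ = {x : x ⊥ y for all y ∈ U}` is a CFG-space, and every point of `X` is a convex
combination of points of `U ∪ U^⊥`. -/
theorem stmt11 {B X : Type} [BooleanRing B] (m : BooleanMetric B X)
    (z : X) (sm : B → X → X) (hsm : IsScalarMul m z sm)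
    (U : Set X) (hz : z ∈ U)
    (hU : IsCFGSubspace m U) (hX : IsCFGSubspace m Set.univ) :
    IsCFGSubspace m {x : X | ∀ y ∈ U, Orth m z sm x y} ∧
    ∀ u : X, ∃ (k : ℕ) (a : Fin k → B) (xs : Fin k → X),
      (∀ i, xs i ∈ U ∪ {x : X | ∀ y ∈ U, Orth m z sm x y}) ∧
      PairwiseOrthCoeffs a ∧ (∑ i, a i) = 1 ∧ IsConvComb m a xs u := by
  have hne : U.Nonempty := ⟨z, hz⟩
  refine ⟨hU.isCFGSubspace_orthComplement hne hsm hX, fun u => ?_⟩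
  obtain ⟨q, hq, p, hp, e, hqe, hpe⟩ := hU.exists_orthogonal_decomposition hne hsm u
  refine ⟨2, ![e, e + 1], ![q, p], fun i => ?_, pairwiseOrthCoeffs_pair e, sum_pair e,
    isConvComb_pair_iff.2 ⟨hqe, hpe⟩⟩
  fin_cases i
  exacts [Or.inr hq, Or.inl hp]
end

section
/- Let A be a CFG-ring. A map f : Aⁿ → Aᵐ is contractive with respect to the metrics d(x,y) = e(x₁−y₁) ∨ ⋯ ∨ e(xₙ−yₙ) (and the analogous metric on Aᵐ) if and only if f is a polynomial map, i.e., there exist polynomials f₁,…,fₘ ∈ A[X₁,…,Xₙ] with f(x) = (f₁(x),…,fₘ(x)) for all x ∈ Aⁿ. -/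
/-! A contractive map `f` satisfies `(f x - f y) * d(x, y) = f x - f y`, and this property is
preserved by sums and products, so polynomial maps are contractive. Conversely, every residue
field of a CFG-ring with `k` generators has at most `k` elements, so `a ^ (k! + 1) = a` and
`e a = a ^ k!`; hence `1 - d(x, P)` is a polynomial in `x`. The `kⁿ` points `P_g` built from the
generators satisfy `⋀_g d(x, P_g) = 0`, and gluing the constants `f(P_g)` along the idempotents
`1 - d(x, P_g)` gives a polynomial that agrees with `f`. -/

/-- The order on idempotents of a commutative ring: `a ≤ b` iff `a * b = a`. -/
def ale {A : Type} [CommRing A] (a b : A) : Prop := a * b = a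

/-- The join `v 0 ∨ v 1 ∨ ⋯ ∨ v (n-1)` of a finite family of idempotents, where
`a ∨ b = a + b - a * b`. -/
def bigSup {A : Type} [CommRing A] : {n : ℕ} → (Fin n → A) → A
  | 0, _ => 0
  | _ + 1, v => v 0 + bigSup (Fin.tail v) - v 0 * bigSup (Fin.tail v)

/-- `A` is a CFG-ring: a commutative von Neumann regular ring having finitely many
elements `x₁, …, xₖ` such that every element of `A` is of the form `∑ aᵢ xᵢ` with
`aᵢ` idempotents having pairwise zero products and summing to `1`. -/
def IsCFGRing (A : Type) [CommRing A] : Prop :=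
  (∀ a : A, ∃ b, a * b * a = a) ∧
  ∃ (k : ℕ) (xs : Fin k → A), ∀ x : A, ∃ a : Fin k → A,
    (∀ i, a i * a i = a i) ∧ (∀ i j, i ≠ j → a i * a j = 0) ∧ (∑ i, a i) = 1 ∧
    x = ∑ i, a i * xs i

/-- `e` assigns to each `a : A` the unique idempotent `e a` with `aA = (e a)A`. -/
def IsIdemGen {A : Type} [CommRing A] (e : A → A) : Prop :=
  ∀ a : A, e a * e a = e a ∧ Ideal.span {a} = Ideal.span {e a}

/-- The Boolean metric on `Aⁿ`: `d x y = e(x₁ - y₁) ∨ ⋯ ∨ e(xₙ - yₙ)`. -/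
def dVec {A : Type} [CommRing A] (e : A → A) {n : ℕ} (x y : Fin n → A) : A :=
  bigSup fun i => e (x i - y i)

/-- `U` is an algebraic variety: the common zero set of finitely many polynomials. -/
def IsAlgebraicVariety {A : Type} [CommRing A] {n : ℕ} (U : Set (Fin n → A)) : Prop :=
  ∃ (k : ℕ) (ps : Fin k → MvPolynomial (Fin n) A),
    U = {x : Fin n → A | ∀ j, MvPolynomial.eval x (ps j) = 0}

/-- A subset `S` of a space with `A`-valued Boolean metric `d` is convex: all convex
combinations (with idempotent coefficients having pairwise zero products and summing
to `1`) of points of `S` exist in `S`. -/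
def IsConvexSubA {A Z : Type} [CommRing A] (d : Z → Z → A) (S : Set Z) : Prop :=
  ∀ (k : ℕ) (a : Fin k → A) (xs : Fin k → Z), (∀ i, xs i ∈ S) →
    (∀ i, a i * a i = a i) → (∀ i j, i ≠ j → a i * a j = 0) → (∑ i, a i) = 1 →
    ∃ x ∈ S, ∀ i, a i * d x (xs i) = 0

/-- `S` is a CFG-space: convex, and finitely many points of `S` have every point of `S`
as a convex combination. -/
def IsCFGSubA {A Z : Type} [CommRing A] (d : Z → Z → A) (S : Set Z) : Prop :=
  IsConvexSubA d S ∧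
  ∃ (k : ℕ) (xs : Fin k → Z), (∀ i, xs i ∈ S) ∧
    ∀ x ∈ S, ∃ a : Fin k → A,
      (∀ i, a i * a i = a i) ∧ (∀ i j, i ≠ j → a i * a j = 0) ∧ (∑ i, a i) = 1 ∧
      ∀ i, a i * d x (xs i) = 0

open MvPolynomial Nat

section BigSup

variable {A : Type} [CommRing A] {n : ℕ}

theorem bigSup_eq_one_sub_prod (v : Fin n → A) : bigSup v = 1 - ∏ i, (1 - v i) := by
  induction n with
  | zero => simp [bigSup]
  | succ n ih =>
    rw [bigSup, ih, Fin.prod_univ_succ]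
    simp only [Fin.tail]
    ring

theorem mul_bigSup_eq_zero {a : A} {v : Fin n → A} (h : ∀ i, a * v i = 0) :
    a * bigSup v = 0 := by
  have : a * ∏ i, (1 - v i) = a :=
    Finset.prod_induction _ (fun t => a * t = a) (fun s t hs ht => by rw [← mul_assoc, hs, ht])
      (mul_one a) fun i _ => by rw [mul_sub, mul_one, h i, sub_zero]
  rw [bigSup_eq_one_sub_prod, mul_sub, mul_one, this, sub_self]

theorem mul_bigSup_of_isIdempotentElem {v : Fin n → A} (hv : ∀ i, IsIdempotentElem (v i))
    (i : Fin n) : v i * bigSup v = v i := by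
  have : v i * ∏ j, (1 - v j) = 0 := by
    rw [← Finset.mul_prod_erase _ _ (Finset.mem_univ i), ← mul_assoc, mul_sub, mul_one,
      hv i, sub_self, zero_mul]
  rw [bigSup_eq_one_sub_prod, mul_sub, mul_one, this, sub_zero]

theorem bigSup_mul_of_forall {v : Fin n → A} {d : A} (h : ∀ i, v i * d = v i) :
    bigSup v * d = bigSup v := by
  induction n with
  | zero => simp [bigSup]
  | succ n ih =>
    rw [bigSup]
    linear_combination h 0 + (1 - v 0) * ih (v := Fin.tail v) fun i => h i.succ

end BigSup

namespace IsIdemGen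

variable {A : Type} [CommRing A] {e : A → A}

theorem dvd (he : IsIdemGen e) (a : A) : a ∣ e a := by
  rw [← Ideal.mem_span_singleton, (he a).2]
  exact Ideal.mem_span_singleton_self _

theorem mul_self_eq (he : IsIdemGen e) (a : A) : a * e a = a := by
  obtain ⟨t, ht⟩ : e a ∣ a := by
    rw [← Ideal.mem_span_singleton, ← (he a).2]
    exact Ideal.mem_span_singleton_self _
  linear_combination (e a - 1) * ht + t * (he a).1

theorem mul_eq_zero (he : IsIdemGen e) {a b : A} (h : b * a = 0) : b * e a = 0 := by
  obtain ⟨t, ht⟩ := he.dvd a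
  rw [ht, ← mul_assoc, h, zero_mul]

theorem mul_eq_of_mul_eq (he : IsIdemGen e) {a d : A} (h : a * d = a) : e a * d = e a := by
  obtain ⟨t, ht⟩ := he.dvd a
  rw [ht, mul_right_comm, h]

theorem eq_pow (he : IsIdemGen e) {N : ℕ} (hN : N ≠ 0) (hpow : ∀ a : A, a ^ (N + 1) = a) (a : A) :
    e a = a ^ N := by
  obtain ⟨t, ht⟩ := he.dvd a
  have h₁ : e a * a ^ N = e a := by rw [ht]; linear_combination t * hpow a
  have h₂ : a ^ N * e a = a ^ N := by
    obtain ⟨M, rfl⟩ := Nat.exists_eq_succ_of_ne_zero hN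
    rw [pow_succ, mul_assoc, he.mul_self_eq]
  rw [← h₁, mul_comm, h₂]

end IsIdemGen

section Metric

variable {A : Type} [CommRing A] {e : A → A} {n m : ℕ}

theorem mul_dVec_eq_zero (he : IsIdemGen e) {b : A} {x y : Fin n → A}
    (h : ∀ i, b * (x i - y i) = 0) : b * dVec e x y = 0 :=
  mul_bigSup_eq_zero fun i => he.mul_eq_zero (h i)

theorem sub_mul_dVec (he : IsIdemGen e) (x y : Fin n → A) (i : Fin n) :
    (x i - y i) * dVec e x y = x i - y i := by
  have h := mul_bigSup_of_isIdempotentElem (v := fun j => e (x j - y j)) (fun j => (he _).1) i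
  rw [dVec]
  linear_combination
    (x i - y i) * h + (1 - bigSup fun j => e (x j - y j)) * he.mul_self_eq (x i - y i)

theorem dVec_mul_of_forall (he : IsIdemGen e) {x y : Fin n → A} {d : A}
    (h : ∀ i, (x i - y i) * d = x i - y i) : dVec e x y * d = dVec e x y :=
  bigSup_mul_of_forall fun i => he.mul_eq_of_mul_eq (h i)

theorem contractive_iff (he : IsIdemGen e) (f : (Fin n → A) → Fin m → A) :
    (∀ x y, ale (dVec e (f x) (f y)) (dVec e x y)) ↔
      ∀ x y j, (f x j - f y j) * dVec e x y = f x j - f y j := by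
  refine ⟨fun hf x y j => ?_, fun hf x y => dVec_mul_of_forall he (hf x y)⟩
  rw [← sub_mul_dVec he (f x) (f y) j, mul_assoc, hf x y]

theorem eval_sub_eval_mul_dVec (he : IsIdemGen e) (q : MvPolynomial (Fin n) A)
    (x y : Fin n → A) : (eval x q - eval y q) * dVec e x y = eval x q - eval y q := by
  induction q using MvPolynomial.induction_on with
  | C a => simp
  | add q r hq hr => simp only [map_add]; linear_combination hq + hr
  | mul_X q i hq =>
    simp only [map_mul, eval_X]
    linear_combination x i * hq + eval y q * sub_mul_dVec he x y i

end Metric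

section Glue

variable {R S ι : Type*} [CommRing R] [CommRing S]

/-- Along the list `l`, takes the value `y i` on the idempotent `b i` for the first `i` that
applies. -/
def glue (b y : ι → R) : List ι → R
  | [] => 0
  | i :: l => b i * y i + (1 - b i) * glue b y l

theorem sub_glue {b y : ι → R} {z : R} {l : List ι} (h : ∀ i ∈ l, b i * (z - y i) = 0) :
    z - glue b y l = (l.map fun i => 1 - b i).prod * z := by
  induction l with
  | nil => simp [glue]
  | cons i l ih =>
    rw [glue, List.map_cons, List.prod_cons, mul_assoc,
      ← ih fun j hj => h j (List.mem_cons_of_mem i hj)]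
    linear_combination h i List.mem_cons_self

theorem map_glue (f : R →+* S) (b y : ι → R) (l : List ι) :
    f (glue b y l) = glue (f ∘ b) (f ∘ y) l := by
  induction l with
  | nil => simp [glue]
  | cons i l ih => simp [glue, ih]

end Glue

section CFG

variable {A : Type} [CommRing A] {k : ℕ}

def IsConvexCombOf (xs : Fin k → A) (a : A) : Prop :=
  ∃ c : Fin k → A, (∀ i, c i * c i = c i) ∧ (∀ i j, i ≠ j → c i * c j = 0) ∧ ∑ i, c i = 1 ∧
    a = ∑ i, c i * xs i

theorem IsConvexCombOf.exists_mul_sub_eq_zero {xs : Fin k → A} {a : A}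
    (h : IsConvexCombOf xs a) : ∃ c : Fin k → A, ∑ i, c i = 1 ∧ ∀ i, c i * (a - xs i) = 0 := by
  obtain ⟨c, hidem, horth, hsum, rfl⟩ := h
  refine ⟨c, hsum, fun i => ?_⟩
  rw [mul_sub, Finset.mul_sum, Finset.sum_eq_single i (fun j _ hj => by
    rw [← mul_assoc, horth i j hj.symm, zero_mul]) (by simp), ← mul_assoc, hidem, sub_self]

theorem prod_eq_zero_of_sum_eq_one {ι : Type*} [Fintype ι] [DecidableEq ι] {w d : ι → A}
    (hw : ∑ i, w i = 1) (h : ∀ i, w i * d i = 0) : ∏ i, d i = 0 := by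
  rw [← one_mul (∏ i, d i), ← hw, Finset.sum_mul]
  refine Finset.sum_eq_zero fun i _ => ?_
  rw [← Finset.mul_prod_erase _ _ (Finset.mem_univ i), ← mul_assoc, h i, zero_mul]

theorem prod_dVec_eq_zero {e : A → A} (he : IsIdemGen e) {n : ℕ} {xs : Fin k → A}
    (hxs : ∀ a, IsConvexCombOf xs a) (x : Fin n → A) :
    ∏ g : Fin n → Fin k, dVec e x (fun i => xs (g i)) = 0 := by
  classical
  choose c hc_sum hc using fun i => (hxs (x i)).exists_mul_sub_eq_zero
  refine prod_eq_zero_of_sum_eq_one (w := fun g => ∏ i, c i (g i)) ?_ fun g => ?_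
  · rw [← Fintype.prod_sum]
    simp [hc_sum]
  · refine mul_dVec_eq_zero he fun i => ?_
    rw [← Finset.prod_erase_mul _ _ (Finset.mem_univ i), mul_assoc, hc, mul_zero]

theorem exists_map_eq_map_of_forall_isConvexCombOf {R : Type*} [CommRing R] [IsDomain R]
    (f : A →+* R) {xs : Fin k → A} (hxs : ∀ a, IsConvexCombOf xs a) (a : A) :
    ∃ i, f a = f (xs i) := by
  obtain ⟨c, hc_sum, hc⟩ := (hxs a).exists_mul_sub_eq_zero
  obtain ⟨i, -, hi⟩ : ∃ i ∈ Finset.univ, f (c i) ≠ 0 := by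
    refine Finset.exists_ne_zero_of_sum_ne_zero ?_
    rw [← map_sum, hc_sum, map_one]
    exact one_ne_zero
  refine ⟨i, sub_eq_zero.mp ?_⟩
  simpa [hi] using congrArg f (hc i)

theorem pow_factorial_succ_eq_self {R : Type*} [CommRing R] [IsDomain R] [Fintype R]
    (hR : Fintype.card R ≤ k) (r : R) : r ^ (k ! + 1) = r := by
  let _ : Field R := (Finite.isField_of_domain R).toField
  rcases eq_or_ne r 0 with rfl | hr
  · simp
  obtain ⟨c, hc⟩ : Fintype.card R - 1 ∣ k ! :=
    Nat.dvd_factorial (by have := Fintype.one_lt_card (α := R); omega) (by omega)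
  rw [pow_succ, hc, pow_mul, FiniteField.pow_card_sub_one_eq_one r hr, one_pow, one_mul]

theorem isReduced_of_forall_exists_mul_mul_eq (hreg : ∀ a : A, ∃ b, a * b * a = a) :
    IsReduced A :=
  (isReduced_iff_pow_one_lt 2 one_lt_two).2 fun x hx => by
    obtain ⟨b, hb⟩ := hreg x
    rw [← hb, mul_right_comm, ← sq, hx, zero_mul]

theorem pow_factorial_succ_eq_self_of_isConvexCombOf (hreg : ∀ a : A, ∃ b, a * b * a = a)
    {xs : Fin k → A} (hxs : ∀ a, IsConvexCombOf xs a) (a : A) : a ^ (k ! + 1) = a := by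
  have := isReduced_of_forall_exists_mul_mul_eq hreg
  rw [← sub_eq_zero, ← Submodule.mem_bot A, ← Ideal.zero_eq_bot, ← nilradical_eq_zero,
    nilradical_eq_sInf, Ideal.mem_sInf]
  classical
  intro P hP
  have : P.IsPrime := hP
  have hsurj : Function.Surjective fun i => Ideal.Quotient.mk P (xs i) := fun r => by
    obtain ⟨a, rfl⟩ := Ideal.Quotient.mk_surjective r
    obtain ⟨i, hi⟩ := exists_map_eq_map_of_forall_isConvexCombOf (Ideal.Quotient.mk P) hxs a
    exact ⟨i, hi.symm⟩
  have : Fintype (A ⧸ P) := Fintype.ofSurjective _ hsurj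
  rw [← Ideal.Quotient.eq_zero_iff_mem, map_sub, map_pow, sub_eq_zero]
  exact pow_factorial_succ_eq_self
    ((Fintype.card_le_of_surjective _ hsurj).trans_eq (Fintype.card_fin k)) _

end CFG

section Interpolation

variable {A : Type} [CommRing A] {e : A → A} {n : ℕ} {N : ℕ}

/-- When `e a = a ^ N`, this polynomial evaluates to the idempotent `1 - d(x, P)`. -/
noncomputable def nearPoly (N : ℕ) (P : Fin n → A) : MvPolynomial (Fin n) A :=
  ∏ i, (1 - (X i - C (P i)) ^ N)

theorem eval_nearPoly (hE : ∀ a, e a = a ^ N) (P x : Fin n → A) :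
    eval x (nearPoly N P) = 1 - dVec e x P := by
  simp [nearPoly, dVec, bigSup_eq_one_sub_prod, hE]

noncomputable def interpolant {ι : Type*} [Fintype ι] (N : ℕ) (P : ι → Fin n → A) (v : ι → A) :
    MvPolynomial (Fin n) A :=
  glue (fun g => nearPoly N (P g)) (fun g => C (v g)) Finset.univ.toList

theorem eval_interpolant {m : ℕ} {ι : Type*} [Fintype ι] (hE : ∀ a, e a = a ^ N)
    {P : ι → Fin n → A} (hP : ∀ x, ∏ g, dVec e x (P g) = 0) {f : (Fin n → A) → Fin m → A}
    (hf : ∀ x y j, (f x j - f y j) * dVec e x y = f x j - f y j) (x : Fin n → A) (j : Fin m) :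
    eval x (interpolant N P fun g => f (P g) j) = f x j := by
  have hglue := sub_glue (l := Finset.univ.toList) (z := f x j)
    (b := eval x ∘ fun g => nearPoly N (P g)) (y := eval x ∘ fun g => C (f (P g) j))
    fun g _ => by
      simp only [Function.comp_apply, eval_nearPoly hE, eval_C]
      linear_combination -hf x (P g) j
  simp only [Function.comp_apply, eval_nearPoly hE, sub_sub_cancel, Finset.prod_map_toList,
    hP x, zero_mul, sub_eq_zero] at hglue
  rw [interpolant, map_glue, hglue]

end Interpolation

/-- Over a CFG-ring `A`, a map `f : Aⁿ → Aᵐ` is contractive for the metrics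
`d x y = e(x₁-y₁) ∨ ⋯ ∨ e(xₖ-yₖ)` iff it is a polynomial map. -/
theorem stmt13 {A : Type} [CommRing A] (hA : IsCFGRing A)
    (e : A → A) (he : IsIdemGen e)
    {n m : ℕ} (f : (Fin n → A) → (Fin m → A)) :
    (∀ x y : Fin n → A, ale (dVec e (f x) (f y)) (dVec e x y)) ↔
    ∃ p : Fin m → MvPolynomial (Fin n) A,
      ∀ x : Fin n → A, f x = fun j => MvPolynomial.eval x (p j) := by
  obtain ⟨hreg, k, xs, hxs⟩ := hA
  rw [contractive_iff he]
  constructor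
  · intro hf
    have hE : ∀ a, e a = a ^ k ! :=
      he.eq_pow k.factorial_ne_zero (pow_factorial_succ_eq_self_of_isConvexCombOf hreg hxs)
    let P : (Fin n → Fin k) → Fin n → A := fun g i => xs (g i)
    exact ⟨fun j => interpolant (k !) P fun g => f (P g) j, fun x => funext fun j =>
      (eval_interpolant hE (prod_dVec_eq_zero he hxs) hf x j).symm⟩
  · rintro ⟨p, hp⟩ x y j
    simp only [hp]
    exact eval_sub_eval_mul_dVec he (p j) x y
end
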